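/- arXiv:2406.07799 — 3 statements merged into one kernel-verified Lean document; each statement's English description precedes it below -/
import Mathlib

section
/- Let G be a graph, v a vertex of G, and classify the maximal independent sets of G into: (1) those not containing v, (2) those containing v such that removing v yields a maximal independent set of G - v, and (3) those containing v such that removing v yields a non-maximal independent set of G - v. Then the number of maximal independent sets of type (1) plus the number of type (2) equals the number of maximal independent sets of G - v. -/
open Finset
open scoped Classical

def IsIndepFinset {V : Type*} (G : SimpleGraph V) (s : Finset V) : Prop :=
  ∀ u ∈ s, ∀ v ∈ s, u ≠ v → ¬ G.Adj u v

/-- `s` is a maximal independent set of `G`. -/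
def IsMaxIndep {V : Type*} (G : SimpleGraph V) (s : Finset V) : Prop :=
  IsIndepFinset G s ∧ ∀ t : Finset V, IsIndepFinset G t → s ⊆ t → s = t

/-- `s` is a maximal independent set of `G - v` (viewed inside `V`: `s` is an independent set
of `G` avoiding `v`, maximal among independent sets avoiding `v`). -/
def IsMaxIndepAvoiding {V : Type*} (G : SimpleGraph V) (v : V) (s : Finset V) : Prop :=
  IsIndepFinset G s ∧ v ∉ s ∧
    ∀ t : Finset V, IsIndepFinset G t → v ∉ t → s ⊆ t → s = t

lemma indep_mono {V : Type*} (G : SimpleGraph V) {s t : Finset V} (h : s ⊆ t)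
    (ht : IsIndepFinset G t) : IsIndepFinset G s :=
  fun a ha b hb => ht a (h ha) b (h hb)

lemma type1_iff {V : Type*} (G : SimpleGraph V) (v : V) (s : Finset V) :
    (IsMaxIndep G s ∧ v ∉ s) ↔
      (IsMaxIndepAvoiding G v s ∧ ¬ IsIndepFinset G (insert v s)) := by
  constructor
  · rintro ⟨⟨hind, hmax⟩, hv⟩
    refine ⟨⟨hind, hv, fun t ht _ hst => hmax t ht hst⟩, fun hins => ?_⟩
    have := hmax (insert v s) hins (Finset.subset_insert v s)
    exact hv (this ▸ Finset.mem_insert_self v s)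
  · rintro ⟨⟨hind, hv, hmax⟩, hins⟩
    refine ⟨⟨hind, fun t ht hst => ?_⟩, hv⟩
    by_cases hvt : v ∈ t
    · exact absurd (indep_mono G (Finset.insert_subset hvt hst) ht) hins
    · exact hmax t ht hvt hst

lemma type2_iff {V : Type*} (G : SimpleGraph V) (v : V) (u : Finset V)
    (hu : IsMaxIndepAvoiding G v u) (hins : IsIndepFinset G (insert v u)) :
    IsMaxIndep G (insert v u) ∧ v ∈ insert v u ∧
      IsMaxIndepAvoiding G v ((insert v u).erase v) := by
  obtain ⟨hind, hv, hmax⟩ := hu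
  rw [Finset.erase_insert hv]
  refine ⟨⟨hins, fun t ht hst => ?_⟩, Finset.mem_insert_self v u, hind, hv, hmax⟩
  have hvt : v ∈ t := hst (Finset.mem_insert_self v u)
  have hut : u ⊆ t.erase v := fun a ha =>
    Finset.mem_erase.2 ⟨fun h => hv (h ▸ ha), hst (Finset.mem_insert_of_mem ha)⟩
  have := hmax (t.erase v) (indep_mono G (Finset.erase_subset v t) ht)
    (Finset.notMem_erase v t) hut
  rw [this, Finset.insert_erase hvt]

/-- Classifying the maximal independent sets of `G` relative to a vertex `v`: the number of
those not containing `v` (type 1) plus the number of those containing `v` whose removal of `v`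
is maximal in `G - v` (type 2) equals the number of maximal independent sets of `G - v`. -/
theorem stmt10 {V : Type*} [Fintype V] (G : SimpleGraph V) (v : V) :
    (Finset.univ.filter fun s : Finset V => IsMaxIndep G s ∧ v ∉ s).card +
      (Finset.univ.filter fun s : Finset V =>
        IsMaxIndep G s ∧ v ∈ s ∧ IsMaxIndepAvoiding G v (s.erase v)).card =
    (Finset.univ.filter fun s : Finset V => IsMaxIndepAvoiding G v s).card := by
  classical
  have h1 : (Finset.univ.filter fun s : Finset V => IsMaxIndep G s ∧ v ∉ s) =
      Finset.univ.filter fun s : Finset V =>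
        IsMaxIndepAvoiding G v s ∧ ¬ IsIndepFinset G (insert v s) := by
    apply Finset.filter_congr
    intro s _
    exact type1_iff G v s
  have h2 : (Finset.univ.filter fun s : Finset V =>
        IsMaxIndep G s ∧ v ∈ s ∧ IsMaxIndepAvoiding G v (s.erase v)).card =
      (Finset.univ.filter fun s : Finset V =>
        IsMaxIndepAvoiding G v s ∧ IsIndepFinset G (insert v s)).card := by
    apply Finset.card_bij (fun s _ => s.erase v)
    · rintro s hs
      simp only [Finset.mem_filter, Finset.mem_univ, true_and] at hs ⊢
      obtain ⟨⟨hind, hmax⟩, hvs, havoid⟩ := hs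
      refine ⟨havoid, ?_⟩
      rwa [Finset.insert_erase hvs]
    · rintro s hs t ht h
      simp only [Finset.mem_filter, Finset.mem_univ, true_and] at hs ht
      rw [← Finset.insert_erase hs.2.1, ← Finset.insert_erase ht.2.1, h]
    · rintro u hu
      simp only [Finset.mem_filter, Finset.mem_univ, true_and] at hu
      obtain ⟨havoid, hins⟩ := hu
      refine ⟨insert v u, ?_, ?_⟩
      · simp only [Finset.mem_filter, Finset.mem_univ, true_and]
        exact type2_iff G v u havoid hins
      · exact Finset.erase_insert havoid.2.1
  rw [h1, h2, ← Finset.filter_filter, ← Finset.filter_filter]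
  have := Finset.card_filter_add_card_filter_not
    (s := Finset.univ.filter fun s : Finset V => IsMaxIndepAvoiding G v s)
    (p := fun s => ¬ IsIndepFinset G (insert v s))
  simpa [not_not] using this
end

section
/- Let G be an n-vertex graph, t a positive integer, and m ≤ n. Sample t vertices independently uniformly at random and let U be the set of vertices with no neighbour among the samples. Then the expected number of k-element subsets of U whose common non-neighbourhood has size less than m is at most C(n, k) · (m/n)^t. -/
open Finset
open scoped Classical

noncomputable def sampleU {V : Type*} [Fintype V] (G : SimpleGraph V) {t : ℕ}
    (f : Fin t → V) : Finset V :=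
  Finset.univ.filter fun w => ∀ j : Fin t, ¬ G.Adj w (f j)

/-- The number of vertices of `G` adjacent to no vertex of `X` (the common
non-neighbourhood of `X`). -/
noncomputable def numNonNbrs {V : Type*} [Fintype V] (G : SimpleGraph V) (X : Finset V) : ℕ :=
  (Finset.univ.filter fun w => ∀ x ∈ X, ¬ G.Adj w x).card

/-! A `k`-set `X` lies in `U` exactly when every sample falls in the common non-neighbourhood
of `X`, so exactly `numNonNbrs G X ^ t` of the `n ^ t` samples put `X` inside `U`. Swapping the
order of summation, the expected count is a sum of `(numNonNbrs G X / n) ^ t < (m / n) ^ t` over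
at most `C(n, k)` sets `X`. -/

namespace SimpleGraph

variable {V : Type*} [Fintype V] (G : SimpleGraph V)

theorem subset_sampleU_iff {t : ℕ} (X : Finset V) (f : Fin t → V) :
    X ⊆ sampleU G f ↔
      ∀ j, f j ∈ (univ.filter fun w => ∀ x ∈ X, ¬ G.Adj w x) := by
  simp only [subset_iff, sampleU, mem_filter, mem_univ, true_and, G.adj_comm]
  exact ⟨fun h j x hx => h hx j, fun h x hx j => h j x hx⟩

theorem card_filter_subset_sampleU (t : ℕ) (X : Finset V) :
    #{f : Fin t → V | X ⊆ sampleU G f} = numNonNbrs G X ^ t := by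
  have : ({f : Fin t → V | X ⊆ sampleU G f} : Finset _) =
      Fintype.piFinset fun _ => univ.filter fun w => ∀ x ∈ X, ¬ G.Adj w x := by
    ext f
    simp only [mem_filter, mem_univ, true_and, Fintype.mem_piFinset, subset_sampleU_iff]
  rw [this, Fintype.card_piFinset_const, numNonNbrs]

theorem sum_card_filter_subset_sampleU_le (t : ℕ) (𝒜 : Finset (Finset V)) {m : ℕ}
    (h𝒜 : ∀ X ∈ 𝒜, numNonNbrs G X ≤ m) :
    ∑ f : Fin t → V, #{X ∈ 𝒜 | X ⊆ sampleU G f} ≤ #𝒜 * m ^ t :=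
  calc ∑ f : Fin t → V, #{X ∈ 𝒜 | X ⊆ sampleU G f}
      = ∑ X ∈ 𝒜, numNonNbrs G X ^ t := by
        rw [← sum_congr rfl fun X _ => G.card_filter_subset_sampleU t X]
        exact sum_card_bipartiteAbove_eq_sum_card_bipartiteBelow _
    _ ≤ #𝒜 * m ^ t := by
        rw [← smul_eq_mul]
        exact sum_le_card_nsmul _ _ _ fun X hX => Nat.pow_le_pow_left (h𝒜 X hX) t

end SimpleGraph

theorem stmt14_general {V : Type*} [Fintype V] (G : SimpleGraph V) (t k m : ℕ) :
    (∑ f : Fin t → V,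
        ((Finset.univ.filter fun X : Finset V =>
            X.card = k ∧ X ⊆ sampleU G f ∧ numNonNbrs G X < m).card : ℝ)) /
        (Fintype.card V : ℝ) ^ t ≤
      ((Fintype.card V).choose k : ℝ) * ((m : ℝ) / (Fintype.card V : ℝ)) ^ t := by
  set 𝒜 : Finset (Finset V) := {X ∈ powersetCard k univ | numNonNbrs G X < m}
  have h𝒜 : #𝒜 ≤ (Fintype.card V).choose k :=
    (card_filter_le _ _).trans (by rw [card_powersetCard, card_univ])
  have hcount : ∀ f : Fin t → V,
      (univ.filter fun X : Finset V => X.card = k ∧ X ⊆ sampleU G f ∧ numNonNbrs G X < m) =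
        {X ∈ 𝒜 | X ⊆ sampleU G f} := by
    intro f; ext X; simp only [𝒜, mem_filter, mem_univ, mem_powersetCard, subset_univ]; tauto
  have hsum : ∑ f : Fin t → V, #{X ∈ 𝒜 | X ⊆ sampleU G f} ≤ (Fintype.card V).choose k * m ^ t :=
    (G.sum_card_filter_subset_sampleU_le t 𝒜 fun X hX => (mem_filter.1 hX).2.le).trans
      (Nat.mul_le_mul_right _ h𝒜)
  simp_rw [hcount, div_pow, ← mul_div_assoc]
  gcongr
  exact_mod_cast hsum

/-- Sample `t` vertices independently and uniformly at random and let `U` be the set of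
vertices with no sampled neighbour. The expected number of `k`-element subsets of `U` whose
common non-neighbourhood has size less than `m` is at most `C(n,k) · (m/n)^t`. -/
theorem stmt14 {V : Type*} [Fintype V] (G : SimpleGraph V) (t k m : ℕ)
    (ht : 0 < t) (hm : m ≤ Fintype.card V) :
    (∑ f : Fin t → V,
        ((Finset.univ.filter fun X : Finset V =>
            X.card = k ∧ X ⊆ sampleU G f ∧ numNonNbrs G X < m).card : ℝ)) /
        (Fintype.card V : ℝ) ^ t ≤
      ((Fintype.card V).choose k : ℝ) * ((m : ℝ) / (Fintype.card V : ℝ)) ^ t :=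
  stmt14_general G t k m
end

section
/- Let b ≥ 1 and let G be a graph. Define an independent set of size b to be atypical, and for 1 ≤ i ≤ b-1 recursively define an independent set of size b-i to be atypical if it is contained in at least n^{1-ε/2^i} atypical independent sets of size b-i+1, and typical otherwise. If G has at most n^{b-ε}/b! atypical independent sets of size b, then for each 1 ≤ i ≤ b-1 the number of atypical independent sets of size b-i is at most n^{b-i-ε/2^i}/(b-i)!. -/
open Finset
open scoped Classical

noncomputable def indepSets {V : Type*} (G : SimpleGraph V) [Fintype V] : Finset (Finset V) :=
  Finset.univ.filter fun s => IsIndepFinset G s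

/-- `atypSets G b ε i` is the family of atypical independent sets of size `b - i`:
for `i = 0` these are all independent sets of size `b`, and an independent set of size
`b - i - 1` is atypical if it is contained in at least `n^{1 - ε/2^{i+1}}` atypical
independent sets of size `b - i`. -/
noncomputable def atypSets {V : Type*} [Fintype V] (G : SimpleGraph V) (b : ℕ) (ε : ℝ) :
    ℕ → Finset (Finset V)
  | 0 => (indepSets G).filter fun s => s.card = b
  | (i + 1) => (indepSets G).filter fun s => s.card = b - (i + 1) ∧
      (Fintype.card V : ℝ) ^ (1 - ε / 2 ^ (i + 1)) ≤
        (((atypSets G b ε i).filter fun t => s ⊆ t).card : ℝ)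

/-- If `G` has at most `n^{b-ε}/b!` (atypical) independent sets of size `b`, then for each
`1 ≤ i ≤ b-1` the number of atypical independent sets of size `b-i` is at most
`n^{b-i-ε/2^i}/(b-i)!`. -/
theorem stmt16 {V : Type*} [Fintype V] (G : SimpleGraph V) (b : ℕ) (hb : 1 ≤ b)
    (ε : ℝ) (hε : 0 ≤ ε)
    (h0 : ((atypSets G b ε 0).card : ℝ) ≤
      (Fintype.card V : ℝ) ^ ((b : ℝ) - ε) / (Nat.factorial b : ℝ)) :
    ∀ i : ℕ, 1 ≤ i → i ≤ b - 1 →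
      ((atypSets G b ε i).card : ℝ) ≤
        (Fintype.card V : ℝ) ^ ((b : ℝ) - (i : ℝ) - ε / 2 ^ i) /
          (Nat.factorial (b - i) : ℝ) := by
  have key : ∀ i : ℕ, i ≤ b - 1 →
      ((atypSets G b ε i).card : ℝ) ≤
        (Fintype.card V : ℝ) ^ ((b : ℝ) - (i : ℝ) - ε / 2 ^ i) /
          (Nat.factorial (b - i) : ℝ) := by
    intro i
    induction i with
    | zero =>
      intro _
      simpa using h0
    | succ j ih =>
      intro hj
      have hj' : j ≤ b - 1 := Nat.le_of_succ_le hj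
      have hIH := ih hj'
      have hjb : j + 2 ≤ b := by omega
      set n : ℝ := (Fintype.card V : ℝ) with hn
      by_cases hV : Fintype.card V = 0
      · have hA : atypSets G b ε (j + 1) = ∅ := by
          ext s
          simp only [atypSets, Finset.mem_filter, Finset.notMem_empty, iff_false, not_and]
          intro _ hcard
          exfalso
          have h1 : s.card ≤ Fintype.card V := Finset.card_le_univ s
          omega
        rw [hA]
        simp only [Finset.card_empty, Nat.cast_zero]
        positivity
      · have hn1 : (1 : ℝ) ≤ n := by
          rw [hn]; exact_mod_cast Nat.one_le_iff_ne_zero.mpr hV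
        have hn0 : (0 : ℝ) < n := lt_of_lt_of_le one_pos hn1
        set A := atypSets G b ε (j + 1) with hA
        set B := atypSets G b ε j with hB
        set N : ℝ := n ^ (1 - ε / 2 ^ (j + 1)) with hN
        have hNpos : 0 < N := Real.rpow_pos_of_pos hn0 _
        -- each member of A is in many members of B
        have hmem : ∀ s ∈ A, N ≤ ((B.filter fun t => s ⊆ t).card : ℝ) := by
          intro s hs
          exact (Finset.mem_filter.mp hs).2.2
        have h1 : (A.card : ℝ) * N ≤ ∑ s ∈ A, ((B.filter fun t => s ⊆ t).card : ℝ) := by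
          calc (A.card : ℝ) * N = ∑ _s ∈ A, N := by rw [Finset.sum_const, nsmul_eq_mul]
            _ ≤ _ := Finset.sum_le_sum hmem
        have h2 : ∑ s ∈ A, (B.filter fun t => s ⊆ t).card
            = ∑ t ∈ B, (A.filter fun s => s ⊆ t).card := by
          simp_rw [Finset.card_filter]
          exact Finset.sum_comm
        have hcardB : ∀ t ∈ B, t.card = b - j := by
          intro t ht
          cases j with
          | zero => simpa using (Finset.mem_filter.mp ht).2
          | succ k => exact (Finset.mem_filter.mp ht).2.1
        have h3 : ∀ t ∈ B, (A.filter fun s => s ⊆ t).card ≤ b - j := by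
          intro t ht
          have htc := hcardB t ht
          have hsub : A.filter (fun s => s ⊆ t) ⊆ t.powersetCard (b - (j + 1)) := by
            intro s hs
            rw [Finset.mem_powersetCard]
            obtain ⟨hsA, hst⟩ := Finset.mem_filter.mp hs
            exact ⟨hst, (Finset.mem_filter.mp hsA).2.1⟩
          have hch : (b - j).choose (b - (j + 1)) = b - j := by
            have e1 : b - (j + 1) = (b - j) - 1 := by omega
            rw [e1, Nat.choose_symm (by omega : 1 ≤ b - j), Nat.choose_one_right]
          calc (A.filter fun s => s ⊆ t).card
              ≤ (t.powersetCard (b - (j + 1))).card := Finset.card_le_card hsub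
            _ = (b - j).choose (b - (j + 1)) := by rw [Finset.card_powersetCard, htc]
            _ = b - j := hch
        have h4 : ∑ t ∈ B, (A.filter fun s => s ⊆ t).card ≤ B.card * (b - j) := by
          calc _ ≤ ∑ _t ∈ B, (b - j) := Finset.sum_le_sum h3
            _ = B.card * (b - j) := by rw [Finset.sum_const, smul_eq_mul]
        have hsum : (A.card : ℝ) * N ≤ (B.card : ℝ) * ((b - j : ℕ) : ℝ) := by
          calc (A.card : ℝ) * N ≤ ∑ s ∈ A, ((B.filter fun t => s ⊆ t).card : ℝ) := h1
            _ = ((∑ s ∈ A, (B.filter fun t => s ⊆ t).card : ℕ) : ℝ) := by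
                rw [Nat.cast_sum]
            _ = ((∑ t ∈ B, (A.filter fun s => s ⊆ t).card : ℕ) : ℝ) := by rw [h2]
            _ ≤ ((B.card * (b - j) : ℕ) : ℝ) := by exact_mod_cast h4
            _ = (B.card : ℝ) * ((b - j : ℕ) : ℝ) := by push_cast; ring
        -- now conclude
        have hC : ((b - j : ℕ) : ℝ) = (b : ℝ) - j := by
          push_cast [Nat.cast_sub (by omega : j ≤ b)]; ring
        have hFj : ((b - j).factorial : ℝ)
            = ((b : ℝ) - j) * ((b - (j + 1)).factorial : ℝ) := by
          have e1 : b - j = (b - (j + 1)) + 1 := by omega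
          rw [e1, Nat.factorial_succ]
          push_cast
          rw [show ((b - (j+1) : ℕ) : ℝ) = (b : ℝ) - (j + 1) by
            push_cast [Nat.cast_sub (by omega : j + 1 ≤ b)]; ring]
          ring
        have hexp : n ^ ((b : ℝ) - (j : ℝ) - ε / 2 ^ j) / N
            = n ^ ((b : ℝ) - ((j : ℕ) + 1 : ℕ) - ε / 2 ^ (j + 1)) := by
          rw [hN, ← Real.rpow_sub hn0]
          congr 1
          push_cast
          rw [pow_succ]
          have h2j : (2 : ℝ) ^ j ≠ 0 := by positivity
          field_simp
          ring
        have hstep : (A.card : ℝ) ≤ (B.card : ℝ) * ((b : ℝ) - j) / N := by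
          rw [← hC]
          exact (le_div_iff₀ hNpos).mpr hsum
        have hbj : (0 : ℝ) < (b : ℝ) - j := by
          have : (j : ℝ) + 2 ≤ (b : ℝ) := by exact_mod_cast hjb
          linarith
        have hFpos : (0 : ℝ) < ((b - (j + 1)).factorial : ℝ) := by
          exact_mod_cast Nat.factorial_pos _
        calc (A.card : ℝ) ≤ (B.card : ℝ) * ((b : ℝ) - j) / N := hstep
          _ ≤ (n ^ ((b : ℝ) - (j : ℝ) - ε / 2 ^ j) / ((b - j).factorial : ℝ))
              * ((b : ℝ) - j) / N := by
              gcongr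
          _ = n ^ ((b : ℝ) - ((j : ℕ) + 1 : ℕ) - ε / 2 ^ (j + 1)) /
              ((b - (j + 1)).factorial : ℝ) := by
              rw [← hexp, hFj]
              field_simp
  intro i _ h2
  exact key i h2
end
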